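/- Let d be an integer with 1 ≤ d ≤ 4, let α be a real number with α > 4 if d = 1 and 4/d < α < 4/(d−1) if 2 ≤ d ≤ 4, and let q be a real number with q > 2, and additionally q < 2(d+1)/(d−1) if d ≥ 2. Then there exist real numbers a, b with 0 < a, 0 < b, a + b = 2α + 2 and a < q such that, setting s := q/(q−a), the following admissibility conditions hold: if d = 1 then b > 8 and b·s ≥ 2b/(b−8); if 2 ≤ d ≤ 4 then b > 4 and 2db/(db−8) ≤ b·s ≤ 2b(d+1)/(b(d−1)−4). -/
import Mathlib

lemma aux_one (α q : ℝ) (hα : 4 < α) (hq : 2 < q) :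
    ∃ a b : ℝ, 0 < a ∧ 0 < b ∧ a + b = 2 * α + 2 ∧ a < q ∧
      8 < b ∧ 2 * b / (b - 8) ≤ b * (q / (q - a)) := by
  have hq0 : 0 < q := by linarith
  obtain ⟨a, ha0, ha1, ha2⟩ : ∃ a : ℝ, 0 < a ∧ a ≤ q / 2 ∧ a ≤ α - 4 := by
    refine ⟨(min q (2 * α - 8)) / 2, ?_, ?_, ?_⟩
    · have : 0 < min q (2 * α - 8) := lt_min hq0 (by linarith)
      linarith
    · have := min_le_left q (2 * α - 8); linarith
    · have := min_le_right q (2 * α - 8); linarith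
  set b : ℝ := 2 * α + 2 - a with hb
  clear_value b
  have haq : a < q := by linarith
  have hb8 : 8 < b := by rw [hb]; linarith
  have hb0 : 0 < b := by linarith
  have hqa : 0 < q - a := by linarith
  have hb8' : (0:ℝ) < b - 8 := by linarith
  refine ⟨a, b, ha0, hb0, by rw [hb]; ring, haq, hb8, ?_⟩
  have h5 : 2 * (q - a) ≤ q * (b - 8) := by
    nlinarith [mul_le_mul_of_nonneg_right ha2 (by linarith : (0:ℝ) ≤ q - 2)]
  have key : 2 * b / (b - 8) ≤ b * q / (q - a) := by
    rw [div_le_div_iff₀ hb8' hqa]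
    nlinarith [mul_le_mul_of_nonneg_left h5 hb0.le]
  rw [← mul_div_assoc]
  exact key

lemma aux_two (D α q : ℝ) (hD : 2 ≤ D) (hD4 : D ≤ 4) (hα : 4 / D < α) (hα' : α < 4 / (D - 1))
    (hq : 2 < q) (hq2 : q < 2 * (D + 1) / (D - 1)) :
    ∃ a b : ℝ, 0 < a ∧ 0 < b ∧ a + b = 2 * α + 2 ∧ a < q ∧
      4 < b ∧ 2 * D * b / (D * b - 8) ≤ b * (q / (q - a)) ∧
      b * (q / (q - a)) ≤ 2 * b * (D + 1) / (b * (D - 1) - 4) := by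
  have hD0 : (0:ℝ) < D := by linarith
  have hD1 : (0:ℝ) < D - 1 := by linarith
  have hq0 : 0 < q := by linarith
  have hq2' : (0:ℝ) < q - 2 := by linarith
  have hα1 : 1 < α := by
    have : (1:ℝ) ≤ 4 / D := by rw [le_div_iff₀ hD0]; linarith
    linarith
  have hDα : 0 < 2 * D * α - 8 := by
    have := (div_lt_iff₀ hD0).mp hα; nlinarith
  have hnum : 0 < (2 * D + 6) - (2 * α + 2) * (D - 1) := by
    have := (lt_div_iff₀ hD1).mp hα'; nlinarith
  have hden : 0 < 2 * (D + 1) - q * (D - 1) := by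
    have := (lt_div_iff₀ hD1).mp hq2; nlinarith
  obtain ⟨a, ha0, haq2, haα, key3, key4⟩ :
      ∃ a : ℝ, 0 < a ∧ a ≤ q / 2 ∧ a ≤ α - 1 ∧
        a * (D * (q - 2)) ≤ q * (2 * D * α - 8) ∧
        a * (2 * (D + 1) - q * (D - 1)) ≤ q * ((2 * D + 6) - (2 * α + 2) * (D - 1)) := by
    set M3 : ℝ := q * (2 * D * α - 8) / (D * (q - 2)) with hM3
    set M4 : ℝ := q * ((2 * D + 6) - (2 * α + 2) * (D - 1)) / (2 * (D + 1) - q * (D - 1)) with hM4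
    have hM3pos : 0 < M3 := by rw [hM3]; positivity
    have hM4pos : 0 < M4 := by rw [hM4]; positivity
    refine ⟨(min q (min (2 * α - 2) (min M3 M4))) / 2, ?_, ?_, ?_, ?_, ?_⟩
    · have : 0 < min q (min (2 * α - 2) (min M3 M4)) :=
        lt_min hq0 (lt_min (by linarith) (lt_min hM3pos hM4pos))
      linarith
    · have := min_le_left q (min (2 * α - 2) (min M3 M4)); linarith
    · have h := (min_le_right q (min (2 * α - 2) (min M3 M4))).trans
        (min_le_left (2 * α - 2) (min M3 M4))
      linarith
    · have h : (min q (min (2 * α - 2) (min M3 M4))) / 2 ≤ M3 := by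
        have h := (min_le_right q (min (2 * α - 2) (min M3 M4))).trans
          ((min_le_right (2 * α - 2) (min M3 M4)).trans (min_le_left M3 M4))
        linarith
      rw [hM3, le_div_iff₀ (by positivity : (0:ℝ) < D * (q - 2))] at h
      linarith
    · have h : (min q (min (2 * α - 2) (min M3 M4))) / 2 ≤ M4 := by
        have h := (min_le_right q (min (2 * α - 2) (min M3 M4))).trans
          ((min_le_right (2 * α - 2) (min M3 M4)).trans (min_le_right M3 M4))
        linarith
      rw [hM4, le_div_iff₀ hden] at h
      linarith
  set b : ℝ := 2 * α + 2 - a with hb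
  clear_value b
  have haq : a < q := by linarith
  have hb4 : 4 < b := by rw [hb]; linarith
  have hb0 : 0 < b := by linarith
  have hqa : 0 < q - a := by linarith
  have hDb8 : (0:ℝ) < D * b - 8 := by nlinarith
  have hbD4 : (0:ℝ) < b * (D - 1) - 4 := by nlinarith
  refine ⟨a, b, ha0, hb0, by rw [hb]; ring, haq, hb4, ?_, ?_⟩
  · have h5 : 2 * D * (q - a) ≤ q * (D * b - 8) := by
      rw [hb]; nlinarith [key3]
    have key : 2 * D * b / (D * b - 8) ≤ b * q / (q - a) := by
      rw [div_le_div_iff₀ hDb8 hqa]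
      calc 2 * D * b * (q - a) = b * (2 * D * (q - a)) := by ring
        _ ≤ b * (q * (D * b - 8)) := mul_le_mul_of_nonneg_left h5 hb0.le
        _ = b * q * (D * b - 8) := by ring
    rw [← mul_div_assoc]
    exact key
  · have h6 : q * (b * (D - 1) - 4) ≤ 2 * (D + 1) * (q - a) := by
      rw [hb]; nlinarith [key4]
    have key : b * q / (q - a) ≤ 2 * b * (D + 1) / (b * (D - 1) - 4) := by
      rw [div_le_div_iff₀ hqa hbD4]
      calc b * q * (b * (D - 1) - 4) = b * (q * (b * (D - 1) - 4)) := by ring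
        _ ≤ b * (2 * (D + 1) * (q - a)) := mul_le_mul_of_nonneg_left h6 hb0.le
        _ = 2 * b * (D + 1) * (q - a) := by ring
    rw [← mul_div_assoc]
    exact key

theorem interpolation_exponents_exist (d : ℕ) (hd1 : 1 ≤ d) (hd4 : d ≤ 4) (α q : ℝ)
    (hα1 : d = 1 → 4 < α)
    (hα2 : 2 ≤ d → 4 / (d : ℝ) < α ∧ α < 4 / ((d : ℝ) - 1))
    (hq : 2 < q)
    (hq2 : 2 ≤ d → q < 2 * ((d : ℝ) + 1) / ((d : ℝ) - 1)) :
    ∃ a b : ℝ, 0 < a ∧ 0 < b ∧ a + b = 2 * α + 2 ∧ a < q ∧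
      (d = 1 → 8 < b ∧ 2 * b / (b - 8) ≤ b * (q / (q - a))) ∧
      (2 ≤ d → 4 < b ∧ 2 * (d : ℝ) * b / ((d : ℝ) * b - 8) ≤ b * (q / (q - a)) ∧
        b * (q / (q - a)) ≤ 2 * b * ((d : ℝ) + 1) / (b * ((d : ℝ) - 1) - 4)) := by
  interval_cases d
  · obtain ⟨a, b, h1, h2, h3, h4, h5, h6⟩ := aux_one α q (hα1 rfl) hq
    exact ⟨a, b, h1, h2, h3, h4, fun _ => ⟨h5, h6⟩, fun h => absurd h (by norm_num)⟩
  · obtain ⟨hA, hA'⟩ := hα2 (by norm_num)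
    have hQ2 := hq2 (by norm_num)
    obtain ⟨a, b, h1, h2, h3, h4, h5, h6, h7⟩ :=
      aux_two 2 α q (by norm_num) (by norm_num) (by norm_num at hA ⊢; linarith)
        (by norm_num at hA' ⊢; linarith) hq (by norm_num at hQ2 ⊢; linarith)
    refine ⟨a, b, h1, h2, h3, h4, fun h => absurd h (by norm_num),
      fun _ => ⟨h5, ?_, ?_⟩⟩
    · norm_num at h6 ⊢; exact h6
    · norm_num at h7 ⊢; exact h7
  · obtain ⟨hA, hA'⟩ := hα2 (by norm_num)
    have hQ2 := hq2 (by norm_num)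
    obtain ⟨a, b, h1, h2, h3, h4, h5, h6, h7⟩ :=
      aux_two 3 α q (by norm_num) (by norm_num) (by norm_num at hA ⊢; linarith)
        (by norm_num at hA' ⊢; linarith) hq (by norm_num at hQ2 ⊢; linarith)
    refine ⟨a, b, h1, h2, h3, h4, fun h => absurd h (by norm_num),
      fun _ => ⟨h5, ?_, ?_⟩⟩
    · norm_num at h6 ⊢; exact h6
    · norm_num at h7 ⊢; exact h7
  · obtain ⟨hA, hA'⟩ := hα2 (by norm_num)
    have hQ2 := hq2 (by norm_num)
    obtain ⟨a, b, h1, h2, h3, h4, h5, h6, h7⟩ :=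
      aux_two 4 α q (by norm_num) (by norm_num) (by norm_num at hA ⊢; linarith)
        (by norm_num at hA' ⊢; linarith) hq (by norm_num at hQ2 ⊢; linarith)
    refine ⟨a, b, h1, h2, h3, h4, fun h => absurd h (by norm_num),
      fun _ => ⟨h5, ?_, ?_⟩⟩
    · norm_num at h6 ⊢; exact h6
    · norm_num at h7 ⊢; exact h7
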